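/- arXiv:1607.03294 — 5 statements merged into one kernel-verified Lean document; each statement's English description precedes it below -/
import Mathlib

section
/- For every real μ ≠ 0 and all real numbers T, A with 0 < T ≤ A, one has 0 ≤ F(2/(μ²·A)) - F(2/(μ²·T)) ≤ A/T - 1. -/
open MeasureTheory Real

/-- The exponential integral `E1 x = ∫_x^∞ e^{-t}/t dt`. -/
noncomputable def E1 (x : ℝ) : ℝ := ∫ t in Set.Ioi x, Real.exp (-t) / t

/-- `F x = e^x * E1 x`. -/
noncomputable def F (x : ℝ) : ℝ := Real.exp x * E1 x

/-!
Substituting `t = x s` gives `F x = ∫_1^∞ e^{x(1-s)} / s ds`, whose integrand is antitone in `x`;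
this gives the lower bound. For `a ≤ b` and `s ≥ 1`, the bound `1 - e^{-y} ≤ y` yields
`(e^{a(1-s)} - e^{b(1-s)}) / s ≤ (b - a) e^{a(1-s)}`, and `∫_1^∞ e^{a(1-s)} ds = 1/a`, so
`F a - F b ≤ (b - a) / a`. With `a = 2/(μ²A)` and `b = 2/(μ²T)` this is `A/T - 1`.
-/

lemma exp_mul_one_sub (x s : ℝ) : exp (x * (1 - s)) = exp x * exp (-x * s) := by
  rw [← exp_add]; ring_nf

lemma integrableOn_exp_mul_one_sub {x : ℝ} (hx : 0 < x) :
    IntegrableOn (fun s => exp (x * (1 - s))) (Set.Ioi 1) := by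
  simp_rw [exp_mul_one_sub]
  exact (integrableOn_exp_mul_Ioi (neg_lt_zero.mpr hx) 1).const_mul _

lemma integral_exp_mul_one_sub {x : ℝ} (hx : 0 < x) :
    ∫ s in Set.Ioi 1, exp (x * (1 - s)) = x⁻¹ := by
  simp_rw [exp_mul_one_sub]
  rw [integral_const_mul, integral_exp_mul_Ioi (neg_lt_zero.mpr hx), mul_one, mul_div_assoc',
    mul_neg, neg_div_neg_eq, ← exp_add, add_neg_cancel, exp_zero, one_div]

lemma integrableOn_exp_mul_one_sub_div {x : ℝ} (hx : 0 < x) :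
    IntegrableOn (fun s => exp (x * (1 - s)) / s) (Set.Ioi 1) := by
  have hcont : ContinuousOn (fun s => exp (x * (1 - s)) / s) (Set.Ioi 1) :=
    (by fun_prop : Continuous fun s => exp (x * (1 - s))).continuousOn.div continuousOn_id
      fun s (hs : 1 < s) => by positivity
  refine (integrableOn_exp_mul_one_sub hx).mono' (hcont.aestronglyMeasurable measurableSet_Ioi) ?_
  filter_upwards [ae_restrict_mem measurableSet_Ioi] with s (hs : 1 < s)
  rw [norm_of_nonneg (by positivity)]
  exact div_le_self (exp_pos _).le hs.le

lemma F_eq_integral_Ioi_one {x : ℝ} (hx : 0 < x) :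
    F x = ∫ s in Set.Ioi 1, exp (x * (1 - s)) / s := by
  have hsub := integral_comp_mul_left_Ioi (fun t => exp (-t) / t) 1 hx
  rw [mul_one, smul_eq_mul, ← E1] at hsub
  have hE1 : E1 x = x * ∫ s in Set.Ioi 1, exp (-(x * s)) / (x * s) := by
    rw [hsub, mul_inv_cancel_left₀ hx.ne']
  rw [F, hE1, ← mul_assoc, ← integral_const_mul]
  refine setIntegral_congr_fun measurableSet_Ioi fun s (hs : 1 < s) => ?_
  rw [exp_mul_one_sub]
  field_simp

lemma exp_mul_one_sub_le_of_le {a b s : ℝ} (hab : a ≤ b) (hs : 1 ≤ s) :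
    exp (b * (1 - s)) ≤ exp (a * (1 - s)) :=
  exp_le_exp.mpr (mul_le_mul_of_nonpos_right hab (by linarith))

lemma exp_mul_one_sub_div_sub_le {a b s : ℝ} (hab : a ≤ b) (hs : 1 ≤ s) :
    exp (a * (1 - s)) / s - exp (b * (1 - s)) / s ≤ (b - a) * exp (a * (1 - s)) := by
  have hs0 : 0 < s := by linarith
  have hsplit : exp (b * (1 - s)) = exp (a * (1 - s)) * exp (-((b - a) * (s - 1))) := by
    rw [← exp_add]; ring_nf
  have hdrop : exp (a * (1 - s)) - exp (b * (1 - s)) ≤ (b - a) * (s - 1) * exp (a * (1 - s)) := by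
    rw [hsplit]
    nlinarith [one_sub_le_exp_neg ((b - a) * (s - 1)), exp_pos (a * (1 - s))]
  rw [← sub_div, div_le_iff₀ hs0]
  nlinarith [mul_nonneg (sub_nonneg.mpr hab) (exp_pos (a * (1 - s))).le]

lemma F_antitoneOn : AntitoneOn F (Set.Ioi 0) := fun a (ha : 0 < a) b (hb : 0 < b) hab => by
  rw [F_eq_integral_Ioi_one ha, F_eq_integral_Ioi_one hb]
  exact setIntegral_mono_on (integrableOn_exp_mul_one_sub_div hb)
    (integrableOn_exp_mul_one_sub_div ha) measurableSet_Ioi fun s (hs : 1 < s) =>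
      div_le_div_of_nonneg_right (exp_mul_one_sub_le_of_le hab hs.le) (by linarith)

lemma F_sub_le {a b : ℝ} (ha : 0 < a) (hab : a ≤ b) : F a - F b ≤ (b - a) / a := by
  have hb : 0 < b := ha.trans_le hab
  rw [F_eq_integral_Ioi_one ha, F_eq_integral_Ioi_one hb,
    ← integral_sub (integrableOn_exp_mul_one_sub_div ha) (integrableOn_exp_mul_one_sub_div hb),
    div_eq_mul_inv, ← integral_exp_mul_one_sub ha, ← integral_const_mul]
  exact setIntegral_mono_on
    ((integrableOn_exp_mul_one_sub_div ha).sub (integrableOn_exp_mul_one_sub_div hb))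
    ((integrableOn_exp_mul_one_sub ha).const_mul _) measurableSet_Ioi
    fun s (hs : 1 < s) => exp_mul_one_sub_div_sub_le hab hs.le

theorem F_diff_bound (μ T A : ℝ) (hμ : μ ≠ 0) (hT : 0 < T) (hTA : T ≤ A) :
    0 ≤ F (2 / (μ ^ 2 * A)) - F (2 / (μ ^ 2 * T)) ∧
      F (2 / (μ ^ 2 * A)) - F (2 / (μ ^ 2 * T)) ≤ A / T - 1 := by
  have hA : 0 < A := hT.trans_le hTA
  have ha : 0 < 2 / (μ ^ 2 * A) := by positivity
  have hab : 2 / (μ ^ 2 * A) ≤ 2 / (μ ^ 2 * T) := by gcongr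
  have hratio : (2 / (μ ^ 2 * T) - 2 / (μ ^ 2 * A)) / (2 / (μ ^ 2 * A)) = A / T - 1 := by
    field_simp
  refine ⟨sub_nonneg.mpr (F_antitoneOn ha (ha.trans_le hab) hab), ?_⟩
  rw [← hratio]
  exact F_sub_le ha hab
end

section
/- For every real μ ≠ 0 and all real numbers T, A with T > 0 and T ≤ A ≤ T + √T/|μ|, one has F(2/(μ²·A)) - F(2/(μ²·T)) ≤ 1/(|μ|·√T). -/
open MeasureTheory Real

lemma integrableOn_exp_neg_div_Ioi {x : ℝ} (hx : 0 < x) :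
    IntegrableOn (fun t => exp (-t) / t) (Set.Ioi x) := by
  have hdom : IntegrableOn (fun t => x⁻¹ * exp (-1 * t)) (Set.Ioi x) :=
    (exp_neg_integrableOn_Ioi x one_pos).const_mul _
  refine hdom.mono' ?_ (ae_restrict_of_forall_mem measurableSet_Ioi fun t (ht : x < t) => ?_)
  · exact (continuousOn_exp.comp continuousOn_neg (Set.mapsTo_univ _ _) |>.div continuousOn_id
      fun t (ht : x < t) => (hx.trans ht).ne').aestronglyMeasurable measurableSet_Ioi
  · have ht0 : 0 < t := hx.trans ht
    rw [norm_div, norm_of_nonneg (exp_pos _).le, norm_of_nonneg ht0.le, neg_one_mul,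
      div_eq_mul_inv, mul_comm]
    gcongr

lemma E1_nonneg {x : ℝ} (hx : 0 < x) : 0 ≤ E1 x :=
  setIntegral_nonneg measurableSet_Ioi fun t (ht : x < t) => by
    have : 0 < t := hx.trans ht
    positivity

lemma E1_sub_E1 {a b : ℝ} (ha : 0 < a) (hb : 0 < b) :
    E1 a - E1 b = ∫ t in a..b, exp (-t) / t :=
  intervalIntegral.integral_Ioi_sub_Ioi' (integrableOn_exp_neg_div_Ioi ha)
    (integrableOn_exp_neg_div_Ioi hb)

lemma E1_sub_E1_le {a b : ℝ} (ha : 0 < a) (hab : a ≤ b) :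
    E1 a - E1 b ≤ exp (-a) * log (b / a) := by
  have hb : 0 < b := ha.trans_le hab
  have hinv : IntervalIntegrable (fun t : ℝ => t⁻¹) volume a b :=
    (continuousOn_inv₀.mono fun t (ht : t ∈ Set.Icc a b) => (ha.trans_le ht.1).ne')
      |>.intervalIntegrable_of_Icc hab
  rw [E1_sub_E1 ha hb, ← integral_inv_of_pos ha hb, ← intervalIntegral.integral_const_mul]
  refine intervalIntegral.integral_mono_on hab ?_ (hinv.const_mul _) fun t ht => ?_
  · exact (intervalIntegrable_iff_integrableOn_Ioc_of_le hab).2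
      ((integrableOn_exp_neg_div_Ioi ha).mono_set Set.Ioc_subset_Ioi_self)
  · have ht0 : 0 < t := ha.trans_le ht.1
    rw [div_eq_mul_inv]
    gcongr
    exact ht.1

lemma F_sub_F_le_log_div {a b : ℝ} (ha : 0 < a) (hab : a ≤ b) :
    F a - F b ≤ log (b / a) := by
  have hE1b : exp a * E1 b ≤ exp b * E1 b :=
    mul_le_mul_of_nonneg_right (exp_le_exp.2 hab) (E1_nonneg (ha.trans_le hab))
  calc F a - F b ≤ exp a * (E1 a - E1 b) := by unfold F; linarith
    _ ≤ exp a * (exp (-a) * log (b / a)) := by gcongr; exact E1_sub_E1_le ha hab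
    _ = log (b / a) := by rw [← mul_assoc, ← exp_add, add_neg_cancel, exp_zero, one_mul]

theorem F_diff_bound_sqrt (μ T A : ℝ) (hμ : μ ≠ 0) (hT : 0 < T) (hTA : T ≤ A)
    (hA : A ≤ T + Real.sqrt T / |μ|) :
    F (2 / (μ ^ 2 * A)) - F (2 / (μ ^ 2 * T)) ≤ 1 / (|μ| * Real.sqrt T) := by
  have hA0 : 0 < A := hT.trans_le hTA
  have hratio : 2 / (μ ^ 2 * T) / (2 / (μ ^ 2 * A)) = A / T := by field_simp
  calc F (2 / (μ ^ 2 * A)) - F (2 / (μ ^ 2 * T)) ≤ log (A / T) := by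
        rw [← hratio]
        exact F_sub_F_le_log_div (by positivity) (by gcongr)
    _ ≤ A / T - 1 := log_le_sub_one_of_pos (by positivity)
    _ = (A - T) / T := by field_simp
    _ ≤ sqrt T / |μ| / T := by gcongr; linarith
    _ = 1 / (|μ| * sqrt T) := by
        rw [div_div, div_eq_div_iff (by positivity) (by positivity)]
        linear_combination |μ| * mul_self_sqrt hT.le
end

section
/- For every real μ ≠ 0 and all real numbers T, A with T > 0 and T ≤ A ≤ T + √T/|μ|, one has (2/(μ²·T)) · ∫_T^A F(2/(μ²·x)) · (1/x) dx ≤ (1 + 1/(|μ|·√T)) · (1/(|μ|·√T)). -/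
open MeasureTheory Real

/-! Since `1/t ≤ 1/y` on `(y, ∞)`, `E1 y ≤ e^{-y}/y`, i.e. `F y ≤ 1/y`. Hence the integrand
`F(2/(μ²x))/x` is at most `μ²/2`, the integral is at most `μ²/2 · (A - T) ≤ |μ|√T/2`, and the
left-hand side is at most `a = 1/(|μ|√T) ≤ (1 + a) a`. -/

lemma E1_nonneg_s7 {y : ℝ} (hy : 0 ≤ y) : 0 ≤ E1 y :=
  setIntegral_nonneg measurableSet_Ioi fun _ ht =>
    div_nonneg (exp_pos _).le (hy.trans (le_of_lt ht))

lemma F_nonneg {y : ℝ} (hy : 0 ≤ y) : 0 ≤ F y :=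
  mul_nonneg (exp_pos _).le (E1_nonneg_s7 hy)

lemma E1_le_exp_neg_div {y : ℝ} (hy : 0 < y) : E1 y ≤ exp (-y) / y := by
  have hexp : IntegrableOn (fun t => exp (-t)) (Set.Ioi y) := by
    simpa using exp_neg_integrableOn_Ioi y one_pos
  have hpointwise : ∀ t ∈ Set.Ioi y, exp (-t) / t ≤ exp (-t) * y⁻¹ := fun t ht => by
    rw [div_eq_mul_inv]
    gcongr
    exact le_of_lt ht
  have hint : IntegrableOn (fun t => exp (-t) / t) (Set.Ioi y) := by
    refine Integrable.mono' (hexp.mul_const y⁻¹)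
      ((measurable_exp.comp measurable_neg).div measurable_id).aestronglyMeasurable ?_
    filter_upwards [ae_restrict_mem measurableSet_Ioi] with t ht
    rw [norm_of_nonneg (div_nonneg (exp_pos _).le (hy.trans ht).le)]
    exact hpointwise t ht
  calc E1 y ≤ ∫ t in Set.Ioi y, exp (-t) * y⁻¹ :=
        setIntegral_mono_on hint (hexp.mul_const _) measurableSet_Ioi hpointwise
    _ = exp (-y) / y := by rw [integral_mul_const, integral_exp_neg_Ioi, div_eq_mul_inv]

lemma F_le_inv {y : ℝ} (hy : 0 < y) : F y ≤ y⁻¹ := by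
  calc F y ≤ exp y * (exp (-y) / y) := by unfold F; gcongr; exact E1_le_exp_neg_div hy
    _ = y⁻¹ := by rw [mul_div_assoc', ← exp_add, add_neg_cancel, exp_zero, one_div]

lemma norm_F_div_mul_one_div_le {a b x : ℝ} (ha : 0 < a) (hb : 0 < b) (hx : 0 < x) :
    ‖F (b / (a * x)) * (1 / x)‖ ≤ a / b := by
  have hy : 0 < b / (a * x) := by positivity
  rw [norm_of_nonneg (mul_nonneg (F_nonneg hy.le) (by positivity))]
  calc F (b / (a * x)) * (1 / x) ≤ (b / (a * x))⁻¹ * (1 / x) := by gcongr; exact F_le_inv hy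
    _ = a / b := by field_simp

lemma intervalIntegral_F_div_mul_one_div_le {a b T A : ℝ} (ha : 0 < a) (hb : 0 < b) (hT : 0 < T)
    (hTA : T ≤ A) : ∫ x in T..A, F (b / (a * x)) * (1 / x) ≤ a / b * (A - T) := by
  have hbound : ∀ x ∈ Set.uIoc T A, ‖F (b / (a * x)) * (1 / x)‖ ≤ a / b := fun x hx => by
    rw [Set.uIoc_of_le hTA] at hx
    exact norm_F_div_mul_one_div_le ha hb (hT.trans hx.1)
  have hI := intervalIntegral.norm_integral_le_of_norm_le_const hbound
  rw [abs_of_nonneg (sub_nonneg.mpr hTA)] at hI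
  exact (le_abs_self _).trans ((norm_eq_abs _).symm.le.trans hI)

theorem J2_bound_sqrt (μ T A : ℝ) (hμ : μ ≠ 0) (hT : 0 < T) (hTA : T ≤ A)
    (hA : A ≤ T + Real.sqrt T / |μ|) :
    (2 / (μ ^ 2 * T)) * (∫ x in T..A, F (2 / (μ ^ 2 * x)) * (1 / x)) ≤
      (1 + 1 / (|μ| * Real.sqrt T)) * (1 / (|μ| * Real.sqrt T)) := by
  have hμ2 : 0 < μ ^ 2 := by positivity
  have hμa : 0 < |μ| := abs_pos.mpr hμ
  have hsT : 0 < √T := sqrt_pos.mpr hT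
  have hI : ∫ x in T..A, F (2 / (μ ^ 2 * x)) * (1 / x) ≤ μ ^ 2 / 2 * (√T / |μ|) :=
    (intervalIntegral_F_div_mul_one_div_le hμ2 two_pos hT hTA).trans (by gcongr; linarith)
  have hLHS : (2 / (μ ^ 2 * T)) * (∫ x in T..A, F (2 / (μ ^ 2 * x)) * (1 / x)) ≤
      1 / (|μ| * √T) :=
    calc _ ≤ (2 / (μ ^ 2 * T)) * (μ ^ 2 / 2 * (√T / |μ|)) := by gcongr
      _ = 1 / (|μ| * √T) := by
        rw [← sq_abs μ]
        field_simp
        linear_combination sq_sqrt hT.le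
  have hpos : 0 ≤ 1 / (|μ| * √T) := by positivity
  exact hLHS.trans (le_mul_of_one_le_left hpos (by linarith))
end

section
/- Let (Ω, 𝔽, P) be a probability space, let A > 0 and λ > 0 and μ ≠ 0 be real numbers, and let Z : Ω → ℝ be a random variable with 0 ≤ Z ≤ A almost surely. If E[Z] = A - 1/λ and Var[Z] = (λ - μ²·(A·λ - 1)²)/(λ²·(μ² + λ)), then 1/A ≤ λ ≤ 1/A + (1 + √(4μ²A + 1))/(2μ²A²). -/
/-!
Since `Z ≥ 0`, the mean `A - 1/λ` is nonnegative, which is the lower bound. Since the variance is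
nonnegative and its denominator is positive, `μ² (Aλ - 1)² ≤ λ`; in terms of `x = Aλ - 1` this says
`μ² A x² ≤ x + 1`, so `x` lies below the larger root of `μ² A t² - t - 1`, which is the upper bound.
-/

open MeasureTheory ProbabilityTheory Real

theorem le_div_of_mul_sq_le_add_one {a x : ℝ} (ha : 0 < a) (h : a * x ^ 2 ≤ x + 1) :
    x ≤ (1 + √(4 * a + 1)) / (2 * a) := by
  have hsq : (2 * a * x - 1) ^ 2 ≤ 4 * a + 1 := by nlinarith
  have hroot : 2 * a * x - 1 ≤ √(4 * a + 1) := (le_abs_self _).trans (Real.abs_le_sqrt hsq)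
  rw [le_div_iff₀ (by positivity)]
  linarith

theorem le_one_div_add_of_sq_mul_sub_one_sq_le {A lam μ : ℝ} (hA : 0 < A) (hμ : μ ≠ 0)
    (h : μ ^ 2 * (A * lam - 1) ^ 2 ≤ lam) :
    lam ≤ 1 / A + (1 + √(4 * μ ^ 2 * A + 1)) / (2 * μ ^ 2 * A ^ 2) := by
  have hroot : A * lam - 1 ≤ (1 + √(4 * (μ ^ 2 * A) + 1)) / (2 * (μ ^ 2 * A)) :=
    le_div_of_mul_sq_le_add_one (by positivity) (by nlinarith)
  calc lam = 1 / A + (A * lam - 1) / A := by field_simp; ring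
    _ ≤ 1 / A + (1 + √(4 * (μ ^ 2 * A) + 1)) / (2 * (μ ^ 2 * A)) / A := by gcongr
    _ = 1 / A + (1 + √(4 * μ ^ 2 * A + 1)) / (2 * μ ^ 2 * A ^ 2) := by
        rw [mul_assoc 4, div_div]; ring

theorem lambda_double_inequality_general
    {Ω : Type*} [MeasurableSpace Ω] (P : Measure Ω) [IsProbabilityMeasure P]
    (A lam μ : ℝ) (hA : 0 < A) (hlam : 0 < lam) (hμ : μ ≠ 0)
    (Z : Ω → ℝ)
    (hZae : ∀ᵐ ω ∂P, 0 ≤ Z ω ∧ Z ω ≤ A)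
    (hmean : ∫ ω, Z ω ∂P = A - 1 / lam)
    (hvar : variance Z P = (lam - μ ^ 2 * (A * lam - 1) ^ 2) / (lam ^ 2 * (μ ^ 2 + lam))) :
    1 / A ≤ lam ∧ lam ≤ 1 / A + (1 + Real.sqrt (4 * μ ^ 2 * A + 1)) / (2 * μ ^ 2 * A ^ 2) := by
  have hmean_nonneg : 0 ≤ A - 1 / lam :=
    hmean ▸ integral_nonneg_of_ae (hZae.mono fun _ h => h.1)
  have hvar_nonneg : 0 ≤ lam - μ ^ 2 * (A * lam - 1) ^ 2 := by
    have hden : 0 < lam ^ 2 * (μ ^ 2 + lam) := by positivity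
    have := hvar ▸ variance_nonneg Z P
    simpa using (le_div_iff₀ hden).mp this
  refine ⟨?_, le_one_div_add_of_sq_mul_sub_one_sq_le hA hμ (by linarith)⟩
  rw [one_div_le hA hlam]
  linarith

theorem lambda_double_inequality
    {Ω : Type*} [MeasurableSpace Ω] (P : Measure Ω) [IsProbabilityMeasure P]
    (A lam μ : ℝ) (hA : 0 < A) (hlam : 0 < lam) (hμ : μ ≠ 0)
    (Z : Ω → ℝ) (hZmeas : Measurable Z)
    (hZae : ∀ᵐ ω ∂P, 0 ≤ Z ω ∧ Z ω ≤ A)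
    (hmean : ∫ ω, Z ω ∂P = A - 1 / lam)
    (hvar : variance Z P = (lam - μ ^ 2 * (A * lam - 1) ^ 2) / (lam ^ 2 * (μ ^ 2 + lam))) :
    1 / A ≤ lam ∧ lam ≤ 1 / A + (1 + Real.sqrt (4 * μ ^ 2 * A + 1)) / (2 * μ ^ 2 * A ^ 2) :=
  lambda_double_inequality_general P A lam μ hA hlam hμ Z hZae hmean hvar
end

section
/- Let μ ≠ 0 and A, T > 0 be real numbers. If 1/A ≤ 1/T ≤ 1/A + (1 + √(4μ²A + 1))/(2μ²A²), then T ≤ A ≤ T + √T/|μ|. -/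
/-! Put `c = |μ|` and let `x > 0` solve `x² + x / c = A`, i.e. `x = 2cA / (√(4c²A + 1) + 1)`.
The upper bound assumed for `1 / T` is exactly `1 / x²`, so the hypothesis says `x² ≤ T`,
hence `x ≤ √T`, and monotonicity gives `A = x² + x / c ≤ T + √T / c`. -/

open Real

namespace ThresholdBound

noncomputable def posRoot (c A : ℝ) : ℝ := 2 * c * A / (√(4 * c ^ 2 * A + 1) + 1)

variable {c A : ℝ}

lemma posRoot_pos (hc : 0 < c) (hA : 0 < A) : 0 < posRoot c A := by
  unfold posRoot; positivity

lemma posRoot_sq_add_div (hc : c ≠ 0) (hA : 0 ≤ A) : posRoot c A ^ 2 + posRoot c A / c = A := by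
  have hs : 0 < √(4 * c ^ 2 * A + 1) + 1 := by positivity
  have key : √(4 * c ^ 2 * A + 1) ^ 2 = 4 * c ^ 2 * A + 1 := sq_sqrt (by positivity)
  unfold posRoot
  generalize √(4 * c ^ 2 * A + 1) = s at hs key ⊢
  field_simp
  linear_combination (-A) * key

lemma one_div_posRoot_sq (hc : c ≠ 0) (hA : 0 < A) :
    1 / posRoot c A ^ 2 = 1 / A + (1 + √(4 * c ^ 2 * A + 1)) / (2 * c ^ 2 * A ^ 2) := by
  have hs : 0 < √(4 * c ^ 2 * A + 1) + 1 := by positivity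
  have key : √(4 * c ^ 2 * A + 1) ^ 2 = 4 * c ^ 2 * A + 1 := sq_sqrt (by positivity)
  unfold posRoot
  generalize √(4 * c ^ 2 * A + 1) = s at hs key ⊢
  field_simp
  linear_combination key

end ThresholdBound

open ThresholdBound in
theorem threshold_double_inequality (μ A T : ℝ) (hμ : μ ≠ 0) (hA : 0 < A) (hT : 0 < T)
    (h1 : 1 / A ≤ 1 / T)
    (h2 : 1 / T ≤ 1 / A + (1 + Real.sqrt (4 * μ ^ 2 * A + 1)) / (2 * μ ^ 2 * A ^ 2)) :
    T ≤ A ∧ A ≤ T + Real.sqrt T / |μ| := by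
  have hc : 0 < |μ| := abs_pos.mpr hμ
  set x := posRoot |μ| A
  have hx : 0 < x := posRoot_pos hc hA
  rw [← sq_abs μ, ← one_div_posRoot_sq hc.ne' hA] at h2
  have hxT : x ^ 2 ≤ T := (one_div_le_one_div hT (by positivity)).mp h2
  refine ⟨(one_div_le_one_div hA hT).mp h1, ?_⟩
  calc A = x ^ 2 + x / |μ| := (posRoot_sq_add_div hc.ne' hA.le).symm
    _ ≤ T + √T / |μ| := by gcongr; exact le_sqrt_of_sq_le hxT
end
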